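/- With notation as in the definition of Ω_{2,p;2,q}(u, 0) via θ₂ and w = e^u: if p and q are both even, then Ω_{2,p;2,q} = w^{(p+q)/2+1} / ((1 + (p+q)/2)·((p/2)!)²·((q/2)!)²). -/
import Mathlib


/-- Coefficient of z^a in ∂_v θ₂(u,0;z) = ∑_{m≥0} w^m z^{2m}/(m!)². -/
noncomputable def cA (w : ℝ) (a : ℕ) : ℝ :=
  if Even a then w ^ (a / 2) / (Nat.factorial (a / 2) : ℝ) ^ 2 else 0

/-- Coefficient of z^a in ∂_u θ₂(u,0;z) = ∑_{m≥0} m w^m z^{2m−1}/(m!)². -/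
noncomputable def cB (w : ℝ) (a : ℕ) : ℝ :=
  if Odd a then ((a + 1) / 2 : ℕ) * w ^ ((a + 1) / 2) / (Nat.factorial ((a + 1) / 2) : ℝ) ^ 2
  else 0

lemma cA_even (w : ℝ) (m : ℕ) : cA w (2 * m) = w ^ m / (Nat.factorial m : ℝ) ^ 2 := by
  simp [cA, even_two_mul m, Nat.mul_div_cancel_left m (by norm_num : 0 < 2)]

lemma cA_odd (w : ℝ) (m : ℕ) : cA w (2 * m + 1) = 0 := by
  simp [cA, Nat.even_add_one, even_two_mul m]

lemma cB_even (w : ℝ) (m : ℕ) : cB w (2 * m) = 0 := by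
  simp [cB, Nat.odd_iff, Nat.mul_mod_right]

lemma cB_odd (w : ℝ) (m : ℕ) :
    cB w (2 * m + 1) = ((m + 1 : ℕ) : ℝ) * w ^ (m + 1) / (Nat.factorial (m + 1) : ℝ) ^ 2 := by
  have h : (2 * m + 1 + 1) / 2 = m + 1 := by omega
  simp [cB, h, odd_two_mul_add_one m]

lemma key (w : ℝ) (Ω : ℕ → ℕ → ℝ)
    (hΩ : ∀ a b : ℕ,
      (if a = 0 then 0 else Ω (a - 1) b) + (if b = 0 then 0 else Ω a (b - 1))
        = cA w a * cB w b + cB w a * cA w b) :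
    ∀ i j : ℕ, Ω (2 * i) (2 * j) = w ^ (i + j + 1) /
      (((i + j + 1 : ℕ) : ℝ) * (Nat.factorial i : ℝ) ^ 2 * (Nat.factorial j : ℝ) ^ 2) := by
  intro i
  induction i with
  | zero =>
    intro j
    have h := hΩ 0 (2 * j + 1)
    have h0 : 2 * j + 1 - 1 = 2 * j := by omega
    rw [if_pos rfl, if_neg (by omega), h0] at h
    have hA0 : cA w 0 = 1 := by simp [cA]
    have hB0 : cB w 0 = 0 := by simpa using cB_even w 0
    rw [hA0, hB0, cB_odd, cA_odd] at h
    have hfj : (Nat.factorial j : ℝ) ≠ 0 := Nat.cast_ne_zero.mpr (Nat.factorial_ne_zero j)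
    have hfj1 : ((j : ℝ) + 1) ≠ 0 := by positivity
    rw [zero_add, zero_mul, add_zero] at h
    rw [h, Nat.factorial_succ]
    push_cast
    rw [show (0 : ℕ) + j + 1 = j + 1 by omega]
    push_cast
    field_simp
    ring
  | succ i ih =>
    intro j
    have h1 := hΩ (2 * i + 1) (2 * j + 2)
    have h2 := hΩ (2 * i + 2) (2 * j + 1)
    rw [if_neg (by omega), if_neg (by omega)] at h1 h2
    have e1 : 2 * i + 1 - 1 = 2 * i := by omega
    have e2 : 2 * j + 2 - 1 = 2 * j + 1 := by omega
    have e3 : 2 * i + 2 - 1 = 2 * i + 1 := by omega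
    have e4 : 2 * j + 1 - 1 = 2 * j := by omega
    rw [e1, e2] at h1
    rw [e3, e4] at h2
    have r1 : cA w (2 * i + 1) = 0 := cA_odd w i
    have r2 : cB w (2 * j + 2) = 0 := by
      have := cB_even w (j + 1); rwa [show 2 * (j + 1) = 2 * j + 2 by ring] at this
    have r3 : cB w (2 * i + 1) = ((i + 1 : ℕ) : ℝ) * w ^ (i + 1) / (Nat.factorial (i + 1) : ℝ) ^ 2 :=
      cB_odd w i
    have r4 : cA w (2 * j + 2) = w ^ (j + 1) / (Nat.factorial (j + 1) : ℝ) ^ 2 := by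
      have := cA_even w (j + 1); rwa [show 2 * (j + 1) = 2 * j + 2 by ring] at this
    have r5 : cA w (2 * i + 2) = w ^ (i + 1) / (Nat.factorial (i + 1) : ℝ) ^ 2 := by
      have := cA_even w (i + 1); rwa [show 2 * (i + 1) = 2 * i + 2 by ring] at this
    have r6 : cB w (2 * j + 1) = ((j + 1 : ℕ) : ℝ) * w ^ (j + 1) / (Nat.factorial (j + 1) : ℝ) ^ 2 :=
      cB_odd w j
    have r7 : cA w (2 * j + 1) = 0 := cA_odd w j
    have r8 : cB w (2 * i + 2) = 0 := by
      have := cB_even w (i + 1); rwa [show 2 * (i + 1) = 2 * i + 2 by ring] at this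
    rw [r1, r2, r3, r4] at h1
    rw [r5, r6, r7, r8] at h2
    have ihj : Ω (2 * i) (2 * j + 2) = w ^ (i + (j + 1) + 1) /
        (((i + (j + 1) + 1 : ℕ) : ℝ) * (Nat.factorial i : ℝ) ^ 2
          * (Nat.factorial (j + 1) : ℝ) ^ 2) := by
      have := ih (j + 1); rwa [show 2 * (j + 1) = 2 * j + 2 by ring] at this
    -- From h1: Ω (2i+1) (2j+1) = RHS1 - Ω (2i) (2j+2)
    -- From h2: Ω (2(i+1)) (2j) = RHS2 - Ω (2i+1) (2j+1)
    have goal_eq : Ω (2 * (i + 1)) (2 * j) =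
        (w ^ (i + 1) / (Nat.factorial (i + 1) : ℝ) ^ 2 *
          (((j + 1 : ℕ) : ℝ) * w ^ (j + 1) / (Nat.factorial (j + 1) : ℝ) ^ 2))
        - (((i + 1 : ℕ) : ℝ) * w ^ (i + 1) / (Nat.factorial (i + 1) : ℝ) ^ 2 *
            (w ^ (j + 1) / (Nat.factorial (j + 1) : ℝ) ^ 2))
        + Ω (2 * i) (2 * j + 2) := by
      have : 2 * (i + 1) = 2 * i + 2 := by ring
      rw [this]
      linarith [h1, h2]
    rw [goal_eq, ihj]
    have hfi : (Nat.factorial i : ℝ) ≠ 0 := Nat.cast_ne_zero.mpr (Nat.factorial_ne_zero i)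
    have hfj : (Nat.factorial j : ℝ) ≠ 0 := Nat.cast_ne_zero.mpr (Nat.factorial_ne_zero j)
    have hi1 : ((i : ℝ) + 1) ≠ 0 := by positivity
    have hj1 : ((j : ℝ) + 1) ≠ 0 := by positivity
    have hs : ((i : ℝ) + (j : ℝ) + 2) ≠ 0 := by positivity
    rw [Nat.factorial_succ i, Nat.factorial_succ j]
    push_cast
    rw [show (i : ℝ) + 1 + (j : ℝ) + 1 = (i : ℝ) + (j : ℝ) + 2 by ring,
        show (i : ℝ) + ((j : ℝ) + 1) + 1 = (i : ℝ) + (j : ℝ) + 2 by ring]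
    have hpow : w ^ (i + 1) * w ^ (j + 1) = w ^ (i + j + 2) := by
      rw [← pow_add]; ring_nf
    field_simp
    ring
/-- if p and q are both even then
Ω_{2,p;2,q} = w^{(p+q)/2+1}/((1+(p+q)/2)·((p/2)!)²·((q/2)!)²). -/
theorem stmt12 (w : ℝ) (Ω : ℕ → ℕ → ℝ)
    (hΩ : ∀ a b : ℕ,
      (if a = 0 then 0 else Ω (a - 1) b) + (if b = 0 then 0 else Ω a (b - 1))
        = cA w a * cB w b + cB w a * cA w b) :
    ∀ p q : ℕ, Even p → Even q →
      Ω p q = w ^ ((p + q) / 2 + 1) /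
        ((((p + q) / 2 + 1 : ℕ) : ℝ) * (Nat.factorial (p / 2) : ℝ) ^ 2
          * (Nat.factorial (q / 2) : ℝ) ^ 2) := by
  intro p q hp hq
  obtain ⟨i, rfl⟩ := hp
  obtain ⟨j, rfl⟩ := hq
  have hp2 : (i + i + (j + j)) / 2 = i + j := by omega
  have hi2 : (i + i) / 2 = i := by omega
  have hj2 : (j + j) / 2 = j := by omega
  rw [hp2, hi2, hj2, show i + i = 2 * i by ring, show j + j = 2 * j by ring]
  exact key w Ω hΩ i j
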